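/- arXiv:1709.02027 — 7 statements merged into one kernel-verified Lean document; each statement's English description precedes it below -/
import Mathlib

section
/- A subset A of a group G is right piecewise syndetic if and only if there exist a right syndetic set B and a right thick set C such that A = B ∩ C. -/
/-!
If `F * B = G` and `C` is right thick, then `F * (B ∩ C)` is right thick: translate a finite `E`
into `C` together with `F⁻¹ * E`, and write each `e * g` as `f * b` with `b = f⁻¹ * e * g ∈ C`.
Conversely, if `F * A` is right thick with `1 ∈ F`, then `A = (A ∪ (F * A)ᶜ) ∩ F * A`, and the first
factor is right syndetic because `F * (A ∪ (F * A)ᶜ)` contains both `F * A` and its complement.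
-/

open Pointwise

def RightThick {G : Type*} [Group G] (A : Set G) : Prop :=
  ∀ F : Finset G, ∃ g : G, ∀ f ∈ F, f * g ∈ A

def RightSyndetic {G : Type*} [Group G] (A : Set G) : Prop :=
  ∃ F : Finset G, (F : Set G) * A = Set.univ

def RightPiecewiseSyndetic {G : Type*} [Group G] (A : Set G) : Prop :=
  ∃ F : Finset G, RightThick ((F : Set G) * A)

section

variable {G : Type*} [Group G]

theorem RightThick.mono {A B : Set G} (hA : RightThick A) (hAB : A ⊆ B) : RightThick B := fun F ↦
  (hA F).imp fun _ hg f hf ↦ hAB (hg f hf)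

theorem RightPiecewiseSyndetic.exists_one_mem {A : Set G} (hA : RightPiecewiseSyndetic A) :
    ∃ F : Finset G, 1 ∈ F ∧ RightThick ((F : Set G) * A) := by
  classical
  obtain ⟨F, hF⟩ := hA
  refine ⟨insert 1 F, Finset.mem_insert_self _ _, hF.mono ?_⟩
  exact Set.mul_subset_mul_right (by simp)

theorem rightSyndetic_union_compl_mul {F : Finset G} (hF : 1 ∈ F) (A : Set G) :
    RightSyndetic (A ∪ ((F : Set G) * A)ᶜ) := by
  refine ⟨F, Set.eq_univ_of_univ_subset ?_⟩
  rw [Set.mul_union, ← Set.union_compl_self ((F : Set G) * A)]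
  exact Set.union_subset_union_right _ (Set.subset_mul_right _ hF)

theorem RightSyndetic.rightPiecewiseSyndetic_inter {B C : Set G} (hB : RightSyndetic B)
    (hC : RightThick C) : RightPiecewiseSyndetic (B ∩ C) := by
  classical
  obtain ⟨F, hFB⟩ := hB
  refine ⟨F, fun E ↦ ?_⟩
  obtain ⟨g, hg⟩ := hC (F⁻¹ * E)
  refine ⟨g, fun e he ↦ ?_⟩
  obtain ⟨f, hf, b, hb, hfb⟩ : e * g ∈ (F : Set G) * B := hFB ▸ Set.mem_univ _
  have hbC : b ∈ C := by
    have hb_eq : b = f⁻¹ * e * g := by rw [mul_assoc, ← hfb, inv_mul_cancel_left]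
    exact hb_eq ▸ hg _ (Finset.mul_mem_mul (Finset.inv_mem_inv hf) he)
  exact ⟨f, hf, b, ⟨hb, hbC⟩, hfb⟩

end

theorem stmt3 {G : Type*} [Group G] (A : Set G) :
    RightPiecewiseSyndetic A ↔
      ∃ B C : Set G, RightSyndetic B ∧ RightThick C ∧ A = B ∩ C := by
  constructor
  · intro hA
    obtain ⟨F, hF, hthick⟩ := hA.exists_one_mem
    refine ⟨_, _, rightSyndetic_union_compl_mul hF A, hthick, ?_⟩
    rw [Set.union_inter_distrib_right, Set.compl_inter_self, Set.union_empty,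
      Set.inter_eq_left.mpr (Set.subset_mul_right A hF)]
  · rintro ⟨B, C, hB, hC, rfl⟩
    exact hB.rightPiecewiseSyndetic_inter hC
end

section
/- If a right thick subset A of a group G is partitioned into two sets A₁ and A₂, then at least one of A₁, A₂ is right piecewise syndetic. (Partition regularity of piecewise syndeticity, two-piece case applied to thick sets.) -/
open Pointwise

/-! If `A₁` is not thick, some finite `H` witnesses this at every point: each `x` has an
`h ∈ H` with `h * x ∉ A₁`. Inside a translate `(H * E) * g ⊆ A` such points land in `A₂`,
so `E * g ⊆ H⁻¹ * A₂`, i.e. `A₂` is piecewise syndetic with the finite set `H⁻¹`. -/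

section

variable {G : Type*} [Group G] {A B C : Set G}

theorem RightThick.rightPiecewiseSyndetic (hA : RightThick A) : RightPiecewiseSyndetic A :=
  ⟨1, by rwa [Finset.coe_one, one_mul]⟩

theorem not_rightThick_iff : ¬ RightThick A ↔ ∃ F : Finset G, ∀ g : G, ∃ f ∈ F, f * g ∉ A := by
  simp only [RightThick, not_forall, not_exists, exists_prop]

theorem RightThick.rightPiecewiseSyndetic_of_subset_union (hA : RightThick A)
    (hsub : A ⊆ B ∪ C) (hB : ¬ RightThick B) : RightPiecewiseSyndetic C := by
  classical
  obtain ⟨H, hH⟩ := not_rightThick_iff.1 hB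
  refine ⟨H⁻¹, fun E => ?_⟩
  obtain ⟨g, hg⟩ := hA (H * E)
  refine ⟨g, fun e he => ?_⟩
  obtain ⟨h, hh, hnotB⟩ := hH (e * g)
  have hC : h * (e * g) ∈ C := by
    have hA' : h * (e * g) ∈ A := mul_assoc h e g ▸ hg _ (Finset.mul_mem_mul hh he)
    exact (hsub hA').resolve_left hnotB
  simpa using Set.mul_mem_mul (Finset.mem_coe.2 (Finset.inv_mem_inv hh)) hC

end

theorem stmt4_general {G : Type*} [Group G] (A A₁ A₂ : Set G)
    (hA : RightThick A) (hunion : A = A₁ ∪ A₂) :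
    RightPiecewiseSyndetic A₁ ∨ RightPiecewiseSyndetic A₂ := by
  by_cases h₁ : RightThick A₁
  · exact Or.inl h₁.rightPiecewiseSyndetic
  · exact Or.inr (hA.rightPiecewiseSyndetic_of_subset_union hunion.le h₁)

theorem stmt4 {G : Type*} [Group G] (A A₁ A₂ : Set G)
    (hA : RightThick A) (hunion : A = A₁ ∪ A₂) (hdisj : Disjoint A₁ A₂) :
    RightPiecewiseSyndetic A₁ ∨ RightPiecewiseSyndetic A₂ :=
  stmt4_general A A₁ A₂ hA hunion
end

section
/- The intersection of two fat subsets of a group G is fat. -/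
open Pointwise

def IsFatWith {G : Type*} [Group G] (m : ℕ) (A : Set G) : Prop :=
  ∀ F : Finset G, F.card = m →
    ∃ D : Finset G, D ⊆ F ∧ D.card = 2 ∧ (D : Set G)⁻¹ * (D : Set G) ⊆ A

def IsFat {G : Type*} [Group G] (A : Set G) : Prop :=
  ∃ m : ℕ, IsFatWith m A

/-!
Call x, y linked when x⁻¹y and y⁻¹x both lie in A. By Ramsey's theorem a large enough F contains
either m_A pairwise unlinked elements, which the fatness of A forbids, or m_B pairwise linked ones.
In the latter case the fatness of B gives a pair D = {x, y} of them with D⁻¹D ⊆ B, and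
D⁻¹D = {1, x⁻¹y, y⁻¹x} lies in A too.
-/

open Finset

section Ramsey

variable {α : Type*} {R : α → α → Prop} [Std.Symm R]

lemma insert_pairwise_of_subset_filter [DecidableEq α] [DecidableRel R] {F S : Finset α} {x : α}
    (hx : x ∈ F) (hS : S ⊆ (F.erase x).filter (R x)) (hSR : (S : Set α).Pairwise R) :
    insert x S ⊆ F ∧ #(insert x S) = #S + 1 ∧ (↑(insert x S) : Set α).Pairwise R := by
  have hSF : S ⊆ F.erase x := hS.trans (filter_subset _ _)
  have hxS : x ∉ S := fun h => (mem_erase.mp (hSF h)).1 rfl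
  refine ⟨insert_subset hx (hSF.trans (erase_subset _ _)), card_insert_of_notMem hxS, ?_⟩
  rw [coe_insert]
  refine hSR.insert fun y hy _ => ?_
  have hxy : R x y := (mem_filter.mp (hS hy)).2
  exact ⟨hxy, symm hxy⟩

lemma exists_pairwise_or_pairwise_not (s t : ℕ) :
    ∃ N : ℕ, ∀ F : Finset α, N ≤ #F →
      (∃ S ⊆ F, #S = s ∧ (S : Set α).Pairwise R) ∨
      (∃ T ⊆ F, #T = t ∧ (T : Set α).Pairwise fun x y => ¬ R x y) := by
  classical
  induction s generalizing t with
  | zero => exact ⟨0, fun F _ => Or.inl ⟨∅, empty_subset F, rfl, by simp⟩⟩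
  | succ s ihs =>
    induction t with
    | zero => exact ⟨0, fun F _ => Or.inr ⟨∅, empty_subset F, rfl, by simp⟩⟩
    | succ t iht =>
      obtain ⟨N₁, hN₁⟩ := ihs (t + 1)
      obtain ⟨N₂, hN₂⟩ := iht
      -- among the other elements of `F`, either the `R`-neighbours of `x` number at least `N₁`
      -- or its non-neighbours number at least `N₂`
      refine ⟨N₁ + N₂ + 1, fun F hF => ?_⟩
      obtain ⟨x, hx⟩ : F.Nonempty := card_pos.mp (by omega)
      have hsplit : #((F.erase x).filter (R x)) + #((F.erase x).filter fun y => ¬ R x y) =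
          #F - 1 := by
        rw [card_filter_add_card_filter_not, card_erase_of_mem hx]
      by_cases h₁ : N₁ ≤ #((F.erase x).filter (R x))
      · rcases hN₁ _ h₁ with ⟨S, hS, hSs, hSR⟩ | ⟨T, hT, hTt, hTR⟩
        · obtain ⟨hSF, hcard, hpair⟩ := insert_pairwise_of_subset_filter hx hS hSR
          exact Or.inl ⟨insert x S, hSF, by rw [hcard, hSs], hpair⟩
        · exact Or.inr ⟨T, hT.trans ((filter_subset _ _).trans (erase_subset _ _)), hTt, hTR⟩
      · rcases hN₂ ((F.erase x).filter fun y => ¬ R x y) (by omega) with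
          ⟨S, hS, hSs, hSR⟩ | ⟨T, hT, hTt, hTR⟩
        · exact Or.inl ⟨S, hS.trans ((filter_subset _ _).trans (erase_subset _ _)), hSs, hSR⟩
        · have : Std.Symm fun a b => ¬ R a b := ⟨fun _ _ h h' => h (symm h')⟩
          obtain ⟨hTF, hcard, hpair⟩ := insert_pairwise_of_subset_filter hx hT hTR
          exact Or.inr ⟨insert x T, hTF, by rw [hcard, hTt], hpair⟩

end Ramsey

section Fat

variable {G : Type*} [Group G] {A : Set G}

lemma inv_mul_pair_subset_iff {x y : G} :
    ({x, y} : Set G)⁻¹ * {x, y} ⊆ A ↔ 1 ∈ A ∧ x⁻¹ * y ∈ A ∧ y⁻¹ * x ∈ A := by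
  simp only [Set.inv_insert, Set.inv_singleton, Set.pair_mul, Set.smul_set_insert,
    Set.smul_set_singleton, smul_eq_mul, inv_mul_cancel, Set.union_subset_iff,
    Set.insert_subset_iff, Set.singleton_subset_iff]
  tauto

lemma IsFatWith.exists_pair {m : ℕ} (h : IsFatWith m A) {F : Finset G} (hF : #F = m) :
    ∃ x ∈ F, ∃ y ∈ F, x ≠ y ∧ 1 ∈ A ∧ x⁻¹ * y ∈ A ∧ y⁻¹ * x ∈ A := by
  classical
  obtain ⟨D, hDF, hD, hDA⟩ := h F hF
  obtain ⟨x, y, hxy, rfl⟩ := card_eq_two.mp hD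
  rw [coe_pair, inv_mul_pair_subset_iff] at hDA
  exact ⟨x, hDF (mem_insert_self x {y}), y, hDF (mem_insert_of_mem (mem_singleton_self y)),
    hxy, hDA⟩

lemma IsFatWith.one_mem {m : ℕ} (h : IsFatWith m A) {F : Finset G} (hF : m ≤ #F) : 1 ∈ A := by
  obtain ⟨F', -, hF'⟩ := exists_subset_card_eq hF
  obtain ⟨-, -, -, -, -, h1, -⟩ := h.exists_pair hF'
  exact h1

end Fat

theorem stmt6 {G : Type*} [Group G] (A B : Set G)
    (hA : IsFat A) (hB : IsFat B) : IsFat (A ∩ B) := by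
  classical
  obtain ⟨mA, hA⟩ := hA
  obtain ⟨mB, hB⟩ := hB
  let R : G → G → Prop := fun x y => x⁻¹ * y ∈ A ∧ y⁻¹ * x ∈ A
  have : Std.Symm R := ⟨fun _ _ h => h.symm⟩
  obtain ⟨N, hN⟩ := exists_pairwise_or_pairwise_not (R := R) mB mA
  refine ⟨max N mA, fun F hF => ?_⟩
  rcases hN F (by omega) with ⟨S, hSF, hS, hSR⟩ | ⟨T, -, hT, hTR⟩
  · obtain ⟨x, hx, y, hy, hxy, hB₁, hBxy, hByx⟩ := hB.exists_pair hS
    obtain ⟨hAxy, hAyx⟩ : R x y := hSR hx hy hxy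
    -- `1 ∈ A` needs an `mA`-element set, hence the `max` above
    have hA₁ : (1 : G) ∈ A := hA.one_mem (F := F) (by omega)
    refine ⟨{x, y}, insert_subset (hSF hx) (singleton_subset_iff.2 (hSF hy)), card_pair hxy, ?_⟩
    rw [coe_pair, Set.subset_inter_iff, inv_mul_pair_subset_iff, inv_mul_pair_subset_iff]
    exact ⟨⟨hA₁, hAxy, hAyx⟩, hB₁, hBxy, hByx⟩
  · obtain ⟨x, hx, y, hy, hxy, -, hRxy⟩ := hA.exists_pair hT
    exact absurd hRxy (hTR hx hy hxy)
end

section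
/- Let G be a group and S ⊆ G a subset with e ∉ S and S ∩ (SS ∪ S⁻¹S⁻¹) = ∅. Then G \ S is 3-fat: every 3-element subset {a,b,c} of G contains a two-element subset D with D⁻¹D ⊆ G \ S. -/
/-! The hypothesis makes the symmetric set `T = S ∪ S⁻¹` product-free: `u, v ∈ T` forces
`u * v ∉ T`. A pair `{x, y}` satisfies `{x, y}⁻¹ * {x, y} ⊆ Sᶜ` as soon as `x⁻¹ * y ∉ T`, and
in a triple `{a, b, c}` the identity `(a⁻¹ * b) * (b⁻¹ * c) = a⁻¹ * c` shows that the three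
quotients cannot all lie in `T`. -/

open Pointwise

section

variable {G : Type*} [Group G] {S : Set G}

lemma mul_notMem_union_inv (hS : S ∩ (S * S ∪ S⁻¹ * S⁻¹) = ∅) {u v : G}
    (hu : u ∈ S ∪ S⁻¹) (hv : v ∈ S ∪ S⁻¹) : u * v ∉ S ∪ S⁻¹ := by
  have hmul : ∀ x ∈ S, ∀ y ∈ S, x * y ∉ S := fun x hx y hy hxy =>
    (Set.eq_empty_iff_forall_notMem.mp hS) _ ⟨hxy, .inl (Set.mul_mem_mul hx hy)⟩
  have hinvmul : ∀ x ∈ S, ∀ y ∈ S, x⁻¹ * y⁻¹ ∉ S := fun x hx y hy hxy =>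
    (Set.eq_empty_iff_forall_notMem.mp hS) _
      ⟨hxy, .inr (Set.mul_mem_mul (Set.inv_mem_inv.mpr hx) (Set.inv_mem_inv.mpr hy))⟩
  simp only [Set.mem_union, Set.mem_inv] at hu hv ⊢
  rintro (huv | huv) <;> rcases hu with hu | hu <;> rcases hv with hv | hv
  · exact hmul u hu v hv huv
  · exact hmul _ huv _ hv (by simpa using hu)
  · exact hmul _ hu _ huv (by simpa using hv)
  · exact hinvmul _ hu _ hv (by simpa using huv)
  · exact hinvmul v hv u hu (by simpa using huv)
  · exact hmul _ huv _ hu (by simpa using hv)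
  · exact hmul _ hv _ huv (by simpa using hu)
  · exact hmul _ hv _ hu (by simpa using huv)

lemma inv_mul_pair_subset_compl (he : (1 : G) ∉ S) {x y : G} (hxy : x⁻¹ * y ∉ S ∪ S⁻¹) :
    ({x, y} : Set G)⁻¹ * {x, y} ⊆ Sᶜ := by
  simp only [Set.mem_union, Set.mem_inv, mul_inv_rev, inv_inv, not_or] at hxy
  obtain ⟨hxy, hyx⟩ := hxy
  rintro _ ⟨p, hp, q, hq, rfl⟩
  simp only [Set.inv_insert, Set.inv_singleton, Set.mem_insert_iff, Set.mem_singleton_iff] at hp hq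
  rcases hp with rfl | rfl <;> rcases hq with rfl | rfl
  all_goals simpa

lemma exists_pair_subset_of_inv_mul_notMem [DecidableEq G] (he : (1 : G) ∉ S) {F : Finset G}
    {x y : G} (hx : x ∈ F) (hy : y ∈ F) (hne : x ≠ y) (hxy : x⁻¹ * y ∉ S ∪ S⁻¹) :
    ∃ D : Finset G, D ⊆ F ∧ D.card = 2 ∧ (D : Set G)⁻¹ * (D : Set G) ⊆ Sᶜ :=
  ⟨{x, y}, Finset.insert_subset hx (Finset.singleton_subset_iff.mpr hy), Finset.card_pair hne,
    by simpa using inv_mul_pair_subset_compl he hxy⟩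

end

theorem stmt9 {G : Type*} [Group G] (S : Set G) (he : (1 : G) ∉ S)
    (hS : S ∩ (S * S ∪ S⁻¹ * S⁻¹) = ∅) :
    IsFatWith 3 Sᶜ := by
  classical
  intro F hF
  obtain ⟨a, b, c, hab, hac, hbc, rfl⟩ := Finset.card_eq_three.mp hF
  by_cases hab' : a⁻¹ * b ∈ S ∪ S⁻¹
  · by_cases hbc' : b⁻¹ * c ∈ S ∪ S⁻¹
    · have hac' : a⁻¹ * c ∉ S ∪ S⁻¹ := by
        simpa [mul_assoc] using mul_notMem_union_inv hS hab' hbc'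
      exact exists_pair_subset_of_inv_mul_notMem he (by simp) (by simp) hac hac'
    · exact exists_pair_subset_of_inv_mul_notMem he (by simp) (by simp) hbc hbc'
  · exact exists_pair_subset_of_inv_mul_notMem he (by simp) (by simp) hab hab'
end

section
/- In the free group G on two generators a and b, the set A of all reduced words whose last letter is a is right thick, but A⁻¹A is not fat: for every m there exists an m-element subset F of G (namely {b, b², ..., bᵐ}) such that no two-element subset D of F satisfies D⁻¹D ⊆ A⁻¹A. -/
/-!
A reduced word `f` of length `< n` followed by `aⁿ` reduces to a word that still ends in `a`, so
`g = aⁿ` with `n` larger than every length in `F` witnesses right thickness. On the other hand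
`bᵏ = p⁻¹ * q` with `p, q ∈ A` is impossible for `k ≠ 0`: since `p` ends in `a`, nothing cancels
in `q = p * bᵏ`, which therefore ends in `b`. Any two distinct `bⁱ, bʲ` give such a quotient.
-/

open Pointwise

namespace FreeGroup

variable {α : Type*} [DecidableEq α]

theorem toWord_mul_eq_append {x y : FreeGroup α}
    (h : ∀ p ∈ x.toWord.getLast?, ∀ q ∈ y.toWord.head?, p.1 = q.1 → p.2 = q.2) :
    (x * y).toWord = x.toWord ++ y.toWord := by
  rw [toWord_mul, IsReduced.reduce_eq]
  exact List.isChain_append.2 ⟨isReduced_toWord, isReduced_toWord, h⟩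

/-- Otherwise nothing cancels in `x = (x * of c ^ n) * (of c ^ n)⁻¹`, so `x` would have length
at least `n`. -/
theorem getLast?_toWord_mul_of_pow_of_norm_lt {x : FreeGroup α} {c : α} {n : ℕ}
    (hx : norm x < n) :
    (x * of c ^ n).toWord.getLast? = some (c, true) := by
  by_contra hne
  have hword : x.toWord = (x * of c ^ n).toWord ++ ((of c ^ n)⁻¹).toWord := by
    conv_lhs => rw [← mul_inv_cancel_right x (of c ^ n)]
    refine toWord_mul_eq_append fun p hp q hq hpq => ?_
    simp only [toWord_inv, toWord_of_pow, invRev, List.map_replicate,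
      List.reverse_replicate, Bool.not_true] at hq
    obtain rfl : q = (c, false) := List.mem_of_mem_head? hq |> List.eq_of_mem_replicate
    cases p
    simp_all
  have hnorm : norm x = norm (x * of c ^ n) + norm (of c ^ n)⁻¹ := by
    rw [norm, norm, norm, hword, List.length_append]
  rw [norm_inv_eq, norm_of_pow] at hnorm
  omega

def wordsEndingWith (a : α) : Set (FreeGroup α) :=
  {w | w.toWord.getLast? = some (a, true)}

theorem rightThick_wordsEndingWith (a : α) : RightThick (wordsEndingWith a) := by
  intro F
  refine ⟨of a ^ (F.sup norm + 1), fun f hf => getLast?_toWord_mul_of_pow_of_norm_lt ?_⟩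
  exact Nat.lt_succ_of_le (F.le_sup hf)

theorem of_pow_notMem_inv_mul_wordsEndingWith {a b : α} (hab : a ≠ b) {k : ℕ} (hk : k ≠ 0) :
    of b ^ k ∉ (wordsEndingWith a)⁻¹ * wordsEndingWith a := by
  rintro ⟨p, hp, q, hq, hpq⟩
  obtain rfl : q = p⁻¹ * of b ^ k := by rw [← hpq, inv_mul_cancel_left]
  have hp : p⁻¹.toWord.getLast? = some (a, true) := hp
  have hq : (p⁻¹ * of b ^ k).toWord.getLast? = some (a, true) := hq
  rw [toWord_mul_eq_append, toWord_of_pow, List.getLast?_append,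
    List.getLast?_replicate, if_neg hk] at hq
  · simp [hab.symm] at hq
  · intro p' hp' q' hq' _
    rw [hp, Option.mem_some_iff] at hp'
    rw [toWord_of_pow] at hq'
    rw [← hp', List.eq_of_mem_replicate (List.mem_of_mem_head? hq')]

end FreeGroup

theorem exists_pow_mem_inv_mul {G : Type*} [Group G] (g : G) {D : Finset G}
    (hD : (D : Set G) ⊆ Set.range (g ^ · : ℕ → G)) (hcard : 1 < D.card) :
    ∃ k ≠ 0, g ^ k ∈ (D : Set G)⁻¹ * D := by
  obtain ⟨x, hx, y, hy, hxy⟩ := Finset.one_lt_card.1 hcard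
  obtain ⟨i, rfl⟩ := hD hx
  obtain ⟨j, rfl⟩ := hD hy
  wlog hij : i < j generalizing i j
  · exact this j hy i hx (Ne.symm hxy) (by grind)
  refine ⟨j - i, by omega, _, Set.inv_mem_inv.2 hx, _, hy, ?_⟩
  rw [inv_mul_eq_iff_eq_mul, ← pow_add, Nat.add_sub_cancel' hij.le]

/-- In the free group on two generators `a = of true`, `b = of false`, the set
`A` of reduced words ending in the letter `a` is right thick, but `A⁻¹ * A` is
not fat: for every `m`, the `m`-element set `{b, b², …, bᵐ}` contains no
two-element subset `D` with `D⁻¹ * D ⊆ A⁻¹ * A`. -/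
theorem stmt12 :
    RightThick {w : FreeGroup Bool | w.toWord.getLast? = some (true, true)} ∧
    ∀ m : ℕ,
      ((Finset.Icc 1 m).image fun i => (FreeGroup.of false : FreeGroup Bool) ^ i).card = m ∧
      ∀ D ⊆ (Finset.Icc 1 m).image fun i => (FreeGroup.of false : FreeGroup Bool) ^ i,
        D.card = 2 →
        ¬ ((D : Set (FreeGroup Bool))⁻¹ * (D : Set (FreeGroup Bool)) ⊆
            {w : FreeGroup Bool | w.toWord.getLast? = some (true, true)}⁻¹ *
            {w : FreeGroup Bool | w.toWord.getLast? = some (true, true)}) := by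
  refine ⟨FreeGroup.rightThick_wordsEndingWith true, fun m => ⟨?_, fun D hD hcard hsub => ?_⟩⟩
  · have hpow : Function.Injective (FreeGroup.of false ^ · : ℕ → FreeGroup Bool) :=
      injective_pow_iff_not_isOfFinOrder.2 <| by
        rw [isOfFinOrder_iff_eq_one]; exact FreeGroup.of_ne_one false
    rw [Finset.card_image_of_injective _ hpow, Nat.card_Icc, Nat.add_sub_cancel]
  · have hDpow : (D : Set (FreeGroup Bool)) ⊆ Set.range (FreeGroup.of false ^ ·) := by
      intro x hx
      obtain ⟨i, -, rfl⟩ := Finset.mem_image.1 (hD hx)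
      exact ⟨i, rfl⟩
    obtain ⟨k, hk, hmem⟩ := exists_pow_mem_inv_mul _ hDpow (by omega)
    exact FreeGroup.of_pow_notMem_inv_mul_wordsEndingWith (by decide) hk (hsub hmem)
end

section
/- Let X be a set and B(X) the free Boolean group on X, identified with the finite subsets of X under symmetric difference. If w₁, ..., w_k ∈ B(X) with k ≠ 4 (k ≥ 2) and wᵢ Δ wⱼ has exactly 2 elements for all i < j ≤ k, then there exist x₁, ..., x_k ∈ X such that wᵢ Δ wⱼ = {xᵢ, xⱼ} for all i < j ≤ k. -/
/-!
For `j ≠ 0` put `Aⱼ = w₀ ∆ wⱼ`. These are two-element sets with `Aᵢ ∆ Aⱼ = wᵢ ∆ wⱼ`, so any two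
of them meet in exactly one point. Two-element sets pairwise meeting in one point either share a
common point or form a triangle `{p, a}, {p, b}, {a, b}`, and no further set meets all three
sides of a triangle in one point. As there are `k - 1 ≠ 3` sets `Aⱼ`, they all contain a common
point `p`; then `x₀ = p` and `xⱼ` is the other point of `Aⱼ`.
-/

open scoped symmDiff

theorem Fintype.exists_ne_ne_ne_of_card_ne_three {ι : Type*} [Fintype ι]
    (hι : Fintype.card ι ≠ 3) {i j m : ι} (hij : i ≠ j) (him : i ≠ m) (hjm : j ≠ m) :
    ∃ n, n ≠ i ∧ n ≠ j ∧ n ≠ m := by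
  classical
  obtain ⟨n, -, hn⟩ : ∃ n ∈ Finset.univ, n ∉ ({i, j, m} : Finset ι) := by
    refine Finset.exists_mem_notMem_of_card_lt_card ?_
    have := Finset.card_eq_three.2 ⟨i, j, m, hij, him, hjm, rfl⟩
    have := Finset.card_le_univ ({i, j, m} : Finset ι)
    rw [Finset.card_univ]
    omega
  simp only [Finset.mem_insert, Finset.mem_singleton, not_or] at hn
  exact ⟨n, hn⟩

namespace Finset

variable {X : Type*} [DecidableEq X]

theorem card_symmDiff_add_two_mul_card_inter (s t : Finset X) :
    #(s ∆ t) + 2 * #(s ∩ t) = #s + #t := by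
  have hst : s ∆ t = (s ∪ t) \ (s ∩ t) := symmDiff_eq_sup_sdiff_inf s t
  have := card_union_add_card_inter s t
  have := card_le_card (inter_subset_union (s := s) (t := t))
  rw [hst, card_sdiff_of_subset inter_subset_union]
  omega

theorem card_inter_eq_one_of_card_symmDiff_eq_two {s t : Finset X} (hs : #s = 2) (ht : #t = 2)
    (hst : #(s ∆ t) = 2) : #(s ∩ t) = 1 := by
  have := card_symmDiff_add_two_mul_card_inter s t
  omega

theorem card_inter_pair_eq_one_iff {s : Finset X} {a b : X} (hab : a ≠ b) :
    #(s ∩ {a, b}) = 1 ↔ (a ∈ s ↔ b ∉ s) := by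
  by_cases ha : a ∈ s <;> by_cases hb : b ∈ s <;>
    simp [inter_insert_of_mem, inter_insert_of_notMem, ha, hb, hab]

theorem eq_pair_of_card_eq_two {s : Finset X} {a b : X} (hs : #s = 2) (ha : a ∈ s) (hb : b ∈ s)
    (hab : a ≠ b) : s = {a, b} :=
  (eq_of_subset_of_card_le (insert_subset ha (singleton_subset_iff.2 hb))
    (by rw [hs, card_pair hab])).symm

theorem exists_eq_pair_of_mem_of_card_eq_two {s : Finset X} {p : X} (hp : p ∈ s) (hs : #s = 2) :
    ∃ a, a ≠ p ∧ s = {p, a} := by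
  obtain ⟨a, ha, hne⟩ := exists_mem_ne (by omega : 1 < #s) p
  exact ⟨a, hne, eq_pair_of_card_eq_two hs hp ha hne.symm⟩

theorem pair_symmDiff_pair {p a b : X} (ha : a ≠ p) (hb : b ≠ p) (hab : a ≠ b) :
    ({p, a} : Finset X) ∆ {p, b} = {a, b} := by
  ext x
  simp only [mem_symmDiff, mem_insert, mem_singleton]
  grind

-- Otherwise `p ∈ s`, `a ∈ s`, `b ∈ s` would be three pairwise different truth values.
theorem not_card_inter_pair_eq_one_of_triangle {s : Finset X} {p a b : X} (hpa : p ≠ a)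
    (hpb : p ≠ b) (hab : a ≠ b) (h₁ : #(s ∩ {p, a}) = 1) (h₂ : #(s ∩ {p, b}) = 1) :
    #(s ∩ {a, b}) ≠ 1 := by
  rw [card_inter_pair_eq_one_iff hpa] at h₁
  rw [card_inter_pair_eq_one_iff hpb] at h₂
  rw [Ne, card_inter_pair_eq_one_iff hab]
  tauto

theorem exists_forall_mem_of_card_symmDiff_eq_two {ι : Type*} [Fintype ι] [Nonempty ι]
    (hι : Fintype.card ι ≠ 3) (E : ι → Finset X) (hE : ∀ i, #(E i) = 2)
    (hEE : ∀ i j, i ≠ j → #(E i ∆ E j) = 2) : ∃ p, ∀ i, p ∈ E i := by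
  have hinter : ∀ i j, i ≠ j → #(E i ∩ E j) = 1 := fun i j hij ↦
    card_inter_eq_one_of_card_symmDiff_eq_two (hE i) (hE j) (hEE i j hij)
  rcases subsingleton_or_nontrivial ι with _ | _
  · obtain ⟨i⟩ := ‹Nonempty ι›
    obtain ⟨p, hp⟩ := card_pos.1 (hE i ▸ two_pos)
    exact ⟨p, fun j ↦ Subsingleton.elim i j ▸ hp⟩
  obtain ⟨i, j, hij⟩ := exists_pair_ne ι
  obtain ⟨p, hp⟩ := card_eq_one.1 (hinter i j hij)
  have hpi : p ∈ E i := (mem_inter.1 (hp ▸ mem_singleton_self p)).1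
  have hpj : p ∈ E j := (mem_inter.1 (hp ▸ mem_singleton_self p)).2
  obtain ⟨a, hap, hEi⟩ := exists_eq_pair_of_mem_of_card_eq_two hpi (hE i)
  obtain ⟨b, hbp, hEj⟩ := exists_eq_pair_of_mem_of_card_eq_two hpj (hE j)
  have hab : a ≠ b := by
    rintro rfl
    simpa [hEi, hEj] using hEE i j hij
  refine ⟨p, fun m ↦ ?_⟩
  by_contra hpm
  have hmi : m ≠ i := by rintro rfl; exact hpm hpi
  have hmj : m ≠ j := by rintro rfl; exact hpm hpj
  have ham : a ∈ E m := by
    have := hinter m i hmi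
    rw [hEi, card_inter_pair_eq_one_iff hap.symm] at this
    tauto
  have hbm : b ∈ E m := by
    have := hinter m j hmj
    rw [hEj, card_inter_pair_eq_one_iff hbp.symm] at this
    tauto
  have hEm : E m = {a, b} := eq_pair_of_card_eq_two (hE m) ham hbm hab
  obtain ⟨n, hni, hnj, hnm⟩ := Fintype.exists_ne_ne_ne_of_card_ne_three hι hij hmi.symm hmj.symm
  exact not_card_inter_pair_eq_one_of_triangle hap.symm hbp.symm hab
    (hEi ▸ hinter n i hni) (hEj ▸ hinter n j hnj) (hEm ▸ hinter n m hnm)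

end Finset

open Finset

/-- In the free Boolean group on `X` (finite subsets of `X` under symmetric
difference), if `k ≠ 4`, `k ≥ 2`, and all pairwise symmetric differences of
`w 1, …, w k` are two-element sets, then there exist `x i ∈ X` with
`w i ∆ w j = {x i, x j}` for all `i < j`. -/
theorem stmt17 {X : Type*} [DecidableEq X] (k : ℕ) (hk : 2 ≤ k) (hk4 : k ≠ 4)
    (w : Fin k → Finset X)
    (h : ∀ i j : Fin k, i < j → (w i ∆ w j).card = 2) :
    ∃ x : Fin k → X, ∀ i j : Fin k, i < j → w i ∆ w j = {x i, x j} := by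
  obtain ⟨n, rfl⟩ : ∃ n, k = n + 2 := ⟨k - 2, by omega⟩
  have hw : ∀ i j, i ≠ j → #(w i ∆ w j) = 2 := fun i j hij ↦ by
    rcases hij.lt_or_gt with hlt | hgt
    · exact h i j hlt
    · rw [symmDiff_comm]; exact h j i hgt
  have hsucc : ∀ i j : Fin (n + 1), (w 0 ∆ w i.succ) ∆ (w 0 ∆ w j.succ) = w i.succ ∆ w j.succ :=
    fun i j ↦ by rw [symmDiff_symmDiff_symmDiff_comm, symmDiff_self, bot_symmDiff]
  have hw0 : ∀ j : Fin (n + 1), #(w 0 ∆ w j.succ) = 2 := fun j ↦ hw _ _ (Fin.succ_ne_zero j).symm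
  have hwsucc : ∀ i j : Fin (n + 1), i ≠ j → #(w i.succ ∆ w j.succ) = 2 :=
    fun i j hij ↦ hw _ _ (Fin.succ_injective _ |>.ne hij)
  obtain ⟨p, hp⟩ := exists_forall_mem_of_card_symmDiff_eq_two (by rw [Fintype.card_fin]; omega) _ hw0
    (fun i j hij ↦ hsucc i j ▸ hwsucc i j hij)
  choose y hyp hy using fun j ↦ exists_eq_pair_of_mem_of_card_eq_two (hp j) (hw0 j)
  have hyinj : ∀ i j, i ≠ j → y i ≠ y j := fun i j hij hyij ↦ by
    simpa [← hsucc, hy, hyij] using hwsucc i j hij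
  refine ⟨Fin.cons p y, fun i j hij ↦ ?_⟩
  induction j using Fin.cases with
  | zero => exact absurd hij (Fin.not_lt_zero i)
  | succ j =>
    induction i using Fin.cases with
    | zero => simpa using hy j
    | succ i =>
      rw [← hsucc, hy, hy, Fin.cons_succ, Fin.cons_succ]
      exact pair_symmDiff_pair (hyp i) (hyp j) (hyinj i j (Fin.succ_lt_succ_iff.1 hij).ne)
end

section
/- For any Δ*-set A in a Boolean group G with zero 0, there exists a subset B ⊆ G with |B| = |A| such that (B + B) ⊆ A ∪ {0}. -/
open Pointwise

/-!
Write `R x y` for `x + y ∈ A`. The Δ*-property says exactly that `R` has no infinite independent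
sequence, so the Erdős–Dushnik–Miller theorem `κ → (κ, ℵ₀)²` for `κ = |G|` yields an `R`-clique
`H` with `|H| = |G| ≥ |A|`. Any `B ⊆ H` with `|B| = |A|` works: sums of distinct elements of `B`
lie in `A`, and `b + b = 0`.

For Erdős–Dushnik–Miller, absence of infinite independent sequences first gives, inside any
infinite `S`, a subset `T` of the same size in which every point has fewer than `|S|`
non-neighbours (otherwise one picks points successively inside the previous non-neighbourhood).
If `κ` is regular, a maximal clique in `T` has size `κ`, since otherwise `T` would be covered by
the clique and fewer than `κ` non-neighbourhoods, each of size `< κ`. If `κ` is singular, one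
builds a chain of cliques of length `cf κ` whose sizes are cofinal in `κ`: at each stage one
adds a clique of regular size `δ < κ`, found among points of uniformly bounded degree outside
the non-neighbours of the previous stages, so that the non-neighbourhood of the whole clique
stays of size `< κ`.
-/

universe u

open Cardinal Set

namespace Cardinal

theorem le_mk_sdiff_of_mk_lt {α : Type u} {δ : Cardinal.{u}} {s t : Set α} (hδ : ℵ₀ ≤ δ)
    (hs : δ ≤ #s) (ht : #t < δ) : δ ≤ #(s \ t : Set α) := by
  by_contra! h
  exact (hs.trans (le_mk_sdiff_add_mk s t)).not_gt (add_lt_of_lt hδ h ht)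

theorem succ_lt_of_not_isRegular {κ μ : Cardinal} (hκ : ¬κ.IsRegular) (hμ : ℵ₀ ≤ μ)
    (h : μ < κ) : Order.succ μ < κ :=
  (Order.succ_le_of_lt h).lt_of_ne fun h' => hκ (h' ▸ isRegular_succ hμ)

theorem mk_Iio_ord_toType_lt (c : Cardinal.{u}) (i : c.ord.ToType) : #(Iio i) < c := by
  simpa using mk_Iio_lt i (by simp)

theorem exists_cofinal_ord_cof_toType (κ : Cardinal.{u}) :
    ∃ f : κ.ord.cof.ord.ToType → Cardinal.{u},
      (∀ i, f i < κ) ∧ ∀ μ < κ, ∃ i, μ ≤ f i := by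
  obtain ⟨g, hg⟩ := Ordinal.exists_isFundamentalSeq (o := κ.ord) rfl
  refine ⟨fun i => (g (Ordinal.ToType.mk.symm i)).1.card, fun i => lt_ord.1 (g _).2,
    fun μ hμ => ?_⟩
  obtain ⟨_, ⟨j, rfl⟩, hj⟩ := hg.isCofinal_range ⟨μ.ord, ord_lt_ord.2 hμ⟩
  exact ⟨Ordinal.ToType.mk j, by simpa using ord_le.1 hj⟩

end Cardinal

theorem exists_monotone_forall_of_forall_exists_superset {α ι : Type*} [LinearOrder ι]
    [WellFoundedLT ι] {P : Set α → Prop} {Q : ι → Set α → Prop}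
    (hunion : ∀ (i : ι) (s : Iio i → Set α), Monotone s → (∀ j, P (s j)) →
      P (⋃ j, s j))
    (hext : ∀ i s, P s → ∃ t, s ⊆ t ∧ P t ∧ Q i t) :
    ∃ c : ι → Set α, Monotone c ∧ ∀ i, P (c i) ∧ Q i (c i) := by
  choose! ext hext using hext
  let c : ι → Set α := WellFoundedLT.fix fun i ih => ext i (⋃ j : Iio i, ih j j.2)
  have hc : ∀ i, c i = ext i (⋃ j : Iio i, c j) := WellFoundedLT.fix_eq _
  have hinv : ∀ i, P (c i) ∧ Q i (c i) ∧ ∀ j ≤ i, c j ⊆ c i := by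
    intro i
    induction i using WellFoundedLT.induction with
    | _ i ih =>
    have hmono : Monotone fun j : Iio i => c j := fun j k hjk => (ih k k.2).2.2 j hjk
    obtain ⟨hsub, hP, hQ⟩ := hext i _ (hunion i _ hmono fun j => (ih j j.2).1)
    refine ⟨hc i ▸ hP, hc i ▸ hQ, fun j hj => ?_⟩
    rcases hj.eq_or_lt with rfl | hlt
    · exact subset_rfl
    · exact hc i ▸ (subset_iUnion (fun j : Iio i => c j) ⟨j, hlt⟩).trans hsub
  exact ⟨c, fun j i hji => (hinv i).2.2 j hji, fun i => ⟨(hinv i).1, (hinv i).2.1⟩⟩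

namespace ErdosDushnikMiller

variable {V : Type u} {R : V → V → Prop}
  (hseq : ∀ g : ℕ → V, Function.Injective g → ∃ m n : ℕ, m < n ∧ R (g m) (g n))

theorem exists_injective_forall_not_rel {K : Set (Set V)} {S : Set V} (hS : S ∈ K)
    (hK : ∀ T ∈ K, ∃ x ∈ T, {y ∈ T | y ≠ x ∧ ¬R x y} ∈ K) :
    ∃ g : ℕ → V, Function.Injective g ∧ ∀ m n, m < n → ¬R (g m) (g n) := by
  have : Nonempty V := let ⟨x, _⟩ := hK S hS; ⟨x⟩
  choose! pt hpt hnext using hK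
  set next : Set V → Set V := fun T => {y ∈ T | y ≠ pt T ∧ ¬R (pt T) y}
  have hmem : ∀ n, next^[n] S ∈ K := fun n => by
    induction n with
    | zero => exact hS
    | succ n ih => rw [Function.iterate_succ_apply']; exact hnext _ ih
  have hanti : Antitone fun n => next^[n] S := antitone_nat_of_succ_le fun n => by
    rw [Function.iterate_succ_apply']; exact fun y hy => hy.1
  set g : ℕ → V := fun n => pt (next^[n] S)
  have hg : ∀ m n, m < n → g n ≠ g m ∧ ¬R (g m) (g n) := fun m n hmn => by
    have : g n ∈ next (next^[m] S) := by
      rw [← Function.iterate_succ_apply' next]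
      exact hanti hmn (hpt _ (hmem n))
    exact this.2
  refine ⟨g, fun a b hab => ?_, fun m n hmn => (hg m n hmn).2⟩
  by_contra hne
  rcases lt_or_gt_of_ne hne with h | h
  · exact (hg a b h).1 hab.symm
  · exact (hg b a h).1 hab

include hseq in
theorem exists_subset_forall_mk_inter_lt (S : Set V) (hS : ℵ₀ ≤ #S) :
    ∃ T ⊆ S, #T = #S ∧ ∀ x ∈ T, #(T ∩ {y | ¬R x y} : Set V) < #S := by
  by_contra! h
  obtain ⟨g, hg, hgR⟩ := exists_injective_forall_not_rel (R := R)
    (K := {T | T ⊆ S ∧ #T = #S}) ⟨subset_rfl, rfl⟩ fun T ⟨hTS, hT⟩ => by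
      obtain ⟨x, hx, hdeg⟩ := h T hTS hT
      refine ⟨x, hx, fun y hy => hTS hy.1,
        le_antisymm (hT ▸ mk_le_mk_of_subset fun y hy => hy.1) ?_⟩
      refine (le_mk_sdiff_of_mk_lt hS hdeg (t := {x}) ?_).trans
        (mk_le_mk_of_subset fun y ⟨⟨hyT, hR⟩, hne⟩ => ⟨hyT, hne, hR⟩)
      exact (mk_singleton x).trans_lt (one_lt_aleph0.trans_le hS)
  obtain ⟨m, n, hmn, hR⟩ := hseq g hg
  exact hgR m n hmn hR

theorem exists_subset_pairwise_forall_not_rel [Std.Symm R] (S : Set V) :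
    ∃ M ⊆ S, M.Pairwise R ∧ ∀ x ∈ S \ M, ∃ m ∈ M, ¬R m x := by
  obtain ⟨M, ⟨hMS, hM⟩, hmax⟩ :=
    zorn_subset {H | H ⊆ S ∧ H.Pairwise R} fun c hc hchain =>
      ⟨⋃₀ c, ⟨sUnion_subset fun s hs => (hc hs).1,
        (pairwise_sUnion hchain.directedOn).2 fun s hs => (hc hs).2⟩,
        fun s => subset_sUnion_of_mem⟩
  refine ⟨M, hMS, hM, fun x ⟨hxS, hxM⟩ => ?_⟩
  by_contra! hx
  exact hxM <| hmax ⟨insert_subset hxS hMS,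
    pairwise_insert_of_symm.2 ⟨hM, fun m hm _ => Std.Symm.symm _ _ (hx m hm)⟩⟩
    (subset_insert x M) (mem_insert x M)

include hseq in
theorem exists_subset_pairwise_mk_eq_of_isRegular [Std.Symm R]
    {δ : Cardinal.{u}} (hδ : δ.IsRegular) (S : Set V) (hS : #S = δ) :
    ∃ H ⊆ S, H.Pairwise R ∧ #H = δ := by
  subst hS
  obtain ⟨T, hTS, hT, hdeg⟩ := exists_subset_forall_mk_inter_lt hseq S hδ.aleph0_le
  obtain ⟨M, hMT, hM, hmax⟩ := exists_subset_pairwise_forall_not_rel (R := R) T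
  refine ⟨M, hMT.trans hTS, hM, (mk_le_mk_of_subset (hMT.trans hTS)).antisymm ?_⟩
  by_contra! hMlt
  have hcover : T ⊆ M ∪ ⋃ m ∈ M, T ∩ {y | ¬R m y} := fun x hx => by
    by_cases hxM : x ∈ M
    · exact Or.inl hxM
    · obtain ⟨m, hm, h⟩ := hmax x ⟨hx, hxM⟩
      exact Or.inr (mem_biUnion hm ⟨hx, h⟩)
  have hnonadj : #(⋃ m ∈ M, T ∩ {y | ¬R m y} : Set V) < #S :=
    (mk_biUnion_le _ _).trans_lt <| mul_lt_of_lt hδ.aleph0_le hMlt <|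
      iSup_lt_of_lt_cof_ord (by rwa [hδ.cof_ord]) fun m => hdeg m (hMT m.2)
  exact (hT ▸ mk_le_mk_of_subset hcover).not_gt
    ((mk_union_le _ _).trans_lt (add_lt_of_lt hδ.aleph0_le hMlt hnonadj))

variable (R) in
def IsSmallClique (U : Set V) : Prop :=
  U.Pairwise R ∧ #U < #V ∧ #(⋃ x ∈ U, {y | ¬R x y} : Set V) < #V

theorem IsSmallClique.iUnion {ι : Type u} [Preorder ι] [IsDirectedOrder ι] {s : ι → Set V}
    (hinf : ℵ₀ ≤ #V) (hι : #ι < (#V).ord.cof) (hs : Monotone s)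
    (h : ∀ i, IsSmallClique R (s i)) :
    IsSmallClique R (⋃ i, s i) := by
  have hιV : #ι < #V := hι.trans_le (Ordinal.cof_ord_le _)
  refine ⟨(pairwise_iUnion hs.directed_le).2 fun i => (h i).1, ?_, ?_⟩
  · exact (mk_iUnion_le _).trans_lt <| mul_lt_of_lt hinf hιV <|
      iSup_lt_of_lt_cof_ord hι fun i => (h i).2.1
  · rw [biUnion_iUnion]
    exact (mk_iUnion_le _).trans_lt <| mul_lt_of_lt hinf hιV <|
      iSup_lt_of_lt_cof_ord hι fun i => (h i).2.2

section Singular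

variable (hinf : ℵ₀ ≤ #V) (hsing : ¬(#V).IsRegular) (hdeg : ∀ x, #{y | ¬R x y} < #V)
include hinf hsing hdeg

theorem exists_lt_le_mk_setOf_mk_le {ρ : Cardinal} (hρ : ρ < #V) :
    ∃ γ < #V, ρ ≤ #{x | #{y | ¬R x y} ≤ γ} := by
  obtain ⟨f, hf, hcof⟩ := exists_cofinal_ord_cof_toType (#V)
  by_contra! h
  have hcover : (univ : Set V) ⊆ ⋃ i, {x | #{y | ¬R x y} ≤ f i} := fun x _ =>
    mem_iUnion.2 (hcof _ (hdeg x))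
  have hcof_lt : (#V).ord.cof < #V :=
    (Ordinal.cof_ord_le _).lt_of_ne fun h => hsing ⟨hinf, h.ge⟩
  refine (mk_univ (α := V) ▸ mk_le_mk_of_subset hcover).not_gt ?_
  refine (mk_iUnion_le _).trans_lt (mul_lt_of_lt hinf (by simpa using hcof_lt) ?_)
  exact (ciSup_le' fun i => (h _ (hf i)).le).trans_lt hρ

include hseq in
theorem IsSmallClique.exists_superset [Std.Symm R]
    {U : Set V} (hU : IsSmallClique R U) {μ : Cardinal} (hμ : μ < #V) :
    ∃ U', U ⊆ U' ∧ IsSmallClique R U' ∧ μ < #U' := by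
  obtain ⟨hUR, hUV, hNV⟩ := hU
  set N := ⋃ x ∈ U, {y | ¬R x y}
  have haleph0 : ℵ₀ < #V := hinf.lt_of_ne fun h => hsing (h ▸ isRegular_aleph0)
  set δ := Order.succ (max (max #U #N) (max μ ℵ₀))
  have hδ : δ.IsRegular := isRegular_succ (le_max_right _ _ |>.trans (le_max_right _ _))
  have hδV : δ < #V :=
    succ_lt_of_not_isRegular hsing (le_max_right _ _ |>.trans (le_max_right _ _))
    (max_lt (max_lt hUV hNV) (max_lt hμ haleph0))
  have hmax_lt : max (max #U #N) (max μ ℵ₀) < δ := Order.lt_succ _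
  obtain ⟨γ, hγ, hbig⟩ := exists_lt_le_mk_setOf_mk_le hinf hsing hdeg hδV
  have hUNδ : #(U ∪ N : Set V) < δ := (mk_union_le _ _).trans_lt <| add_lt_of_lt hδ.aleph0_le
    ((le_max_left _ _ |>.trans (le_max_left _ _)).trans_lt hmax_lt)
    ((le_max_right _ _ |>.trans (le_max_left _ _)).trans_lt hmax_lt)
  obtain ⟨S, hS, hSδ⟩ :=
    le_mk_iff_exists_subset.1 (le_mk_sdiff_of_mk_lt hδ.aleph0_le hbig hUNδ)
  obtain ⟨H, hHS, hHR, hHδ⟩ := exists_subset_pairwise_mk_eq_of_isRegular hseq hδ S hSδ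
  have hHV : #H < #V := hHδ ▸ hδV
  refine ⟨U ∪ H, subset_union_left, ⟨?_, ?_, ?_⟩, ?_⟩
  · refine pairwise_union_of_symm.2 ⟨hUR, hHR, fun a ha b hb _ => ?_⟩
    by_contra hab
    exact (hS (hHS hb)).2 (Or.inr (mem_biUnion ha hab))
  · exact (mk_union_le _ _).trans_lt (add_lt_of_lt hinf hUV hHV)
  · rw [biUnion_union]
    refine (mk_union_le _ _).trans_lt (add_lt_of_lt hinf hNV ?_)
    refine (mk_biUnion_le _ _).trans_lt (mul_lt_of_lt hinf hHV ?_)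
    exact (ciSup_le' fun x => (hS (hHS x.2)).1).trans_lt hγ
  · calc μ < δ := (le_max_left _ _ |>.trans (le_max_right _ _)).trans_lt hmax_lt
      _ = #H := hHδ.symm
      _ ≤ #(U ∪ H : Set V) := mk_le_mk_of_subset subset_union_right

include hseq in
theorem exists_pairwise_mk_eq_of_not_isRegular [Std.Symm R] :
    ∃ H : Set V, H.Pairwise R ∧ #H = #V := by
  obtain ⟨f, hf, hcof⟩ := exists_cofinal_ord_cof_toType (#V)
  obtain ⟨c, hc, hcU⟩ := exists_monotone_forall_of_forall_exists_superset
    (P := IsSmallClique R) (Q := fun i U => f i < #U)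
    (fun i _ hs hU => IsSmallClique.iUnion hinf (mk_Iio_ord_toType_lt _ i) hs hU)
    (fun i _ hU => hU.exists_superset hseq hinf hsing hdeg (hf i))
  refine ⟨⋃ i, c i, (pairwise_iUnion hc.directed_le).2 fun i => (hcU i).1.1,
    (mk_set_le _).antisymm ?_⟩
  by_contra! hlt
  obtain ⟨i, hi⟩ := hcof _ hlt
  exact (hi.trans_lt (hcU i).2).not_ge (mk_le_mk_of_subset (subset_iUnion c i))

end Singular

include hseq in
theorem exists_pairwise_mk_eq [Std.Symm R] [Infinite V] :
    ∃ H : Set V, H.Pairwise R ∧ #H = #V := by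
  by_cases hreg : (#V).IsRegular
  · obtain ⟨H, -, hH⟩ := exists_subset_pairwise_mk_eq_of_isRegular hseq hreg univ mk_univ
    exact ⟨H, hH⟩
  obtain ⟨T, -, hT, hdeg⟩ :=
    exists_subset_forall_mk_inter_lt hseq univ (mk_univ (α := V) ▸ aleph0_le_mk V)
  rw [mk_univ] at hT hdeg
  have : Std.Symm fun x y : T => R x y := ⟨fun x y => Std.Symm.symm (r := R) x y⟩
  obtain ⟨H, hHR, hH⟩ := exists_pairwise_mk_eq_of_not_isRegular (V := T) (R := fun x y => R x y)
    (fun g hg => hseq (Subtype.val ∘ g) (Subtype.val_injective.comp hg))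
    (hT ▸ aleph0_le_mk V) (hT ▸ hreg) fun x => by
      rw [hT, ← mk_image_eq Subtype.val_injective]
      exact (Subtype.image_preimage_coe T {y | ¬R x y}).symm ▸ hdeg x x.2
  exact ⟨Subtype.val '' H, Subtype.val_injective.injOn.pairwise_image.2 hHR,
    (mk_image_eq Subtype.val_injective).trans (hH.trans hT)⟩

end ErdosDushnikMiller

/-- For any Δ*-set `A` in an infinite Boolean group `G`, there is `B ⊆ G` with
`|B| = |A|` and `B + B ⊆ A ∪ {0}`. -/
theorem stmt19 {G : Type*} [AddCommGroup G] [Infinite G]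
    (hbool : ∀ g : G, g + g = 0) (A : Set G)
    (hA : ∀ g : ℕ → G, Function.Injective g → ∃ m n : ℕ, m < n ∧ g m + g n ∈ A) :
    ∃ B : Set G, Cardinal.mk B = Cardinal.mk A ∧ B + B ⊆ A ∪ {0} := by
  have : Std.Symm fun x y : G => x + y ∈ A := ⟨fun x y h => by rwa [add_comm]⟩
  obtain ⟨H, hH, hHG⟩ :=
    ErdosDushnikMiller.exists_pairwise_mk_eq (R := fun x y => x + y ∈ A) hA
  obtain ⟨B, hBH, hB⟩ := le_mk_iff_exists_subset.1 (hHG ▸ mk_set_le A)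
  refine ⟨B, hB, add_subset_iff.2 fun x hx y hy => ?_⟩
  rcases eq_or_ne x y with rfl | hxy
  · exact Or.inr (hbool x)
  · exact Or.inl (hH (hBH hx) (hBH hy) hxy)
end
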